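/- If H is a graph with o(H) = 𝒮 and G is a connected graph with n(G) ≥ 2, then γ_SMB(G⊙H) = γ_SMB'(G⊙H) = 1 + γ_SMB(H). -/

import Mathlib

/-!
Formalization of the Maker-Breaker domination game (MBD game).

In the MBD game on a graph `G`, Dominator and Staller alternately select
previously unplayed vertices.  Dominator wins when the set of vertices he has
selected is a dominating set of `G`; Staller wins when she has selected a
vertex of every dominating set of `G`, which happens exactly when the closed
neighbourhood of some vertex is entirely contained in her set of selected
vertices.
-/

/-- `D` is a dominating set of `G` (as a finset of vertices). -/
def IsDomSet {V : Type*} (G : SimpleGraph V) (D : Finset V) : Prop :=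
  ∀ v, v ∈ D ∨ ∃ u ∈ D, G.Adj u v

/-- Staller (whose selected vertices form `S`) has won: she owns the whole
closed neighbourhood of some vertex, hence a vertex of every dominating set. -/
def StallerWon {V : Type*} (G : SimpleGraph V) (S : Finset V) : Prop :=
  ∃ v, v ∈ S ∧ ∀ u, G.Adj v u → u ∈ S

section Game

variable {V : Type*} [DecidableEq V]

mutual
  /-- Position with Dominator's vertices `D`, Staller's vertices `S` and
  Dominator to move: Dominator can guarantee to complete a dominating set
  using at most `k` further moves of his own. -/
  inductive DomWinD (G : SimpleGraph V) : Finset V → Finset V → ℕ → Prop where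
    | done (D S : Finset V) (k : ℕ) : IsDomSet G D → DomWinD G D S k
    | step (D S : Finset V) (k : ℕ) (v : V) : v ∉ D → v ∉ S →
        DomWinS G (insert v D) S k → DomWinD G D S (k + 1)

  /-- Position with Dominator's vertices `D`, Staller's vertices `S` and
  Staller to move: Dominator can guarantee to complete a dominating set
  using at most `k` further moves of his own. -/
  inductive DomWinS (G : SimpleGraph V) : Finset V → Finset V → ℕ → Prop where
    | done (D S : Finset V) (k : ℕ) : IsDomSet G D → DomWinS G D S k
    | step (D S : Finset V) (k : ℕ) : (∃ w, w ∉ D ∧ w ∉ S) →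
        (∀ w, w ∉ D → w ∉ S → DomWinD G D (insert w S) k) → DomWinS G D S k
end

mutual
  /-- Position with Dominator's vertices `D`, Staller's vertices `S` and
  Staller to move: Staller can guarantee to claim a whole closed neighbourhood
  using at most `k` further moves of her own. -/
  inductive StalWinS (G : SimpleGraph V) : Finset V → Finset V → ℕ → Prop where
    | done (D S : Finset V) (k : ℕ) : StallerWon G S → StalWinS G D S k
    | step (D S : Finset V) (k : ℕ) (w : V) : w ∉ D → w ∉ S →
        StalWinD G D (insert w S) k → StalWinS G D S (k + 1)

  /-- Position with Dominator's vertices `D`, Staller's vertices `S` and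
  Dominator to move: Staller can guarantee to claim a whole closed
  neighbourhood using at most `k` further moves of her own. -/
  inductive StalWinD (G : SimpleGraph V) : Finset V → Finset V → ℕ → Prop where
    | done (D S : Finset V) (k : ℕ) : StallerWon G S → StalWinD G D S k
    | step (D S : Finset V) (k : ℕ) : (∃ v, v ∉ D ∧ v ∉ S) →
        (∀ v, v ∉ D → v ∉ S → StalWinS G (insert v D) S k) → StalWinD G D S k
end

/-- `γ_MB(G)`: minimum number of Dominator's moves with which he can guarantee
to win the D-game (Dominator moves first); `⊤` if he cannot win it. -/
noncomputable def gammaMB (G : SimpleGraph V) : ℕ∞ :=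
  sInf {k : ℕ∞ | ∃ n : ℕ, k = n ∧ DomWinD G ∅ ∅ n}

/-- `γ_MB'(G)`: minimum number of Dominator's moves with which he can guarantee
to win the S-game (Staller moves first); `⊤` if he cannot win it. -/
noncomputable def gammaMB' (G : SimpleGraph V) : ℕ∞ :=
  sInf {k : ℕ∞ | ∃ n : ℕ, k = n ∧ DomWinS G ∅ ∅ n}

/-- `γ_SMB(G)`: minimum number of Staller's moves with which she can guarantee
to win the D-game (Dominator moves first); `⊤` if she cannot win it. -/
noncomputable def gammaSMB (G : SimpleGraph V) : ℕ∞ :=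
  sInf {k : ℕ∞ | ∃ n : ℕ, k = n ∧ StalWinD G ∅ ∅ n}

/-- `γ_SMB'(G)`: minimum number of Staller's moves with which she can guarantee
to win the S-game (Staller moves first); `⊤` if she cannot win it. -/
noncomputable def gammaSMB' (G : SimpleGraph V) : ℕ∞ :=
  sInf {k : ℕ∞ | ∃ n : ℕ, k = n ∧ StalWinS G ∅ ∅ n}

/-- Outcome `𝒟`: Dominator has a winning strategy no matter who starts. -/
def OutcomeD (G : SimpleGraph V) : Prop :=
  (∃ n, DomWinD G ∅ ∅ n) ∧ (∃ n, DomWinS G ∅ ∅ n)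

/-- Outcome `𝒮`: Staller has a winning strategy no matter who starts. -/
def OutcomeS (G : SimpleGraph V) : Prop :=
  (∃ n, StalWinD G ∅ ∅ n) ∧ (∃ n, StalWinS G ∅ ∅ n)

/-- Outcome `𝒩`: the first player has a winning strategy. -/
def OutcomeN (G : SimpleGraph V) : Prop :=
  (∃ n, DomWinD G ∅ ∅ n) ∧ (∃ n, StalWinS G ∅ ∅ n)

end Game

/-- The corona product `G ⊙ H`: one copy of `G`, a copy of `H` for every
vertex of `G`, and the `i`-th vertex of `G` joined to every vertex of the
`i`-th copy of `H`. -/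
def coronaProd {α β : Type*} (G : SimpleGraph α) (H : SimpleGraph β) :
    SimpleGraph (α ⊕ α × β) where
  Adj x y :=
    match x, y with
    | Sum.inl a, Sum.inl a' => G.Adj a a'
    | Sum.inl a, Sum.inr p => a = p.1
    | Sum.inr p, Sum.inl a => a = p.1
    | Sum.inr p, Sum.inr q => p.1 = q.1 ∧ H.Adj p.2 q.2
  symm := by
    constructor
    rintro (a | p) (a' | q) h
    · exact G.adj_symm h
    · exact h
    · exact h
    · exact ⟨h.1.symm, H.adj_symm h.2⟩
  loopless := by
    constructor
    rintro (a | p) h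
    · exact G.irrefl h
    · exact H.irrefl h.2

/-- The domination number `γ(G)` of a finite graph. -/
noncomputable def domNumber {V : Type*} [Fintype V] (G : SimpleGraph V) : ℕ :=
  sInf {n : ℕ | ∃ D : Finset V, D.card = n ∧ IsDomSet G D}

/-- `v` is a dominating vertex: it is adjacent to all other vertices. -/
def IsDomVertex {V : Type*} (G : SimpleGraph V) (v : V) : Prop :=
  ∀ u, u ≠ v → G.Adj v u

/-- `v` is an isolated vertex (degree `0`). -/
def IsIsolatedVertex {V : Type*} (G : SimpleGraph V) (v : V) : Prop :=
  ∀ u, ¬ G.Adj v u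

/-- `v` is a leaf (degree `1`). -/
def IsLeaf {V : Type*} (G : SimpleGraph V) (v : V) : Prop :=
  ∃! u, G.Adj v u

/-- `v` is a strong support vertex: adjacent to at least two leaves. -/
def IsStrongSupport {V : Type*} (G : SimpleGraph V) (v : V) : Prop :=
  ∃ u w, u ≠ w ∧ G.Adj v u ∧ G.Adj v w ∧ IsLeaf G u ∧ IsLeaf G w

/-!
Staller wins on `G ⊙ H` by opening one local game: once she owns a vertex `a` of `G`, the closed
neighbourhood of `(a, b)` is `a` together with the `a`-th copy of `N_H[b]`, so she finishes with
her D-game strategy on the `a`-th copy of `H` in `γ_SMB(H)` more moves. In the S-game she claims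
any `a`; in the D-game one whose copy Dominator's first move missed, which exists as `n(G) ≥ 2`.

Conversely every closed neighbourhood of `G ⊙ H` contains some `a` and the `a`-th copy of a closed
neighbourhood of `H`. Dominator answers in the copy Staller just played in: a move in the copy of
an unclaimed `a` by claiming `a`, any other move by his best reply in the local game on the copy.
A local game only starts once Staller claims `a`, as a D-game on `H`, so she needs
`1 + γ_SMB(H)` moves.
-/

open Finset

section Game

variable {V : Type*} [DecidableEq V] {G : SimpleGraph V}

mutual
theorem StalWinS.mono_moves {D S : Finset V} {k k' : ℕ} :
    StalWinS G D S k → k ≤ k' → StalWinS G D S k'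
  | .done _ _ _ hw, _ => .done _ _ _ hw
  | .step _ _ _ w hwD hwS h, hk => by
      obtain ⟨j, rfl⟩ : ∃ j, k' = j + 1 := ⟨k' - 1, by omega⟩
      exact .step _ _ _ w hwD hwS (h.mono_moves (by omega))

theorem StalWinD.mono_moves {D S : Finset V} {k k' : ℕ} :
    StalWinD G D S k → k ≤ k' → StalWinD G D S k'
  | .done _ _ _ hw, _ => .done _ _ _ hw
  | .step _ _ _ hex h, hk => .step _ _ _ hex fun v hvD hvS => (h v hvD hvS).mono_moves hk
end

mutual
theorem StalWinS.of_dom_subset {D D' S : Finset V} {k : ℕ} :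
    StalWinS G D S k → D' ⊆ D → StalWinS G D' S k
  | .done _ _ _ hw, _ => .done _ _ _ hw
  | .step _ _ _ w hwD hwS h, hD => .step _ _ _ w (fun hw => hwD (hD hw)) hwS (h.of_dom_subset hD)

theorem StalWinD.of_dom_subset {D D' S : Finset V} {k : ℕ} :
    StalWinD G D S k → D' ⊆ D → StalWinD G D' S k
  | .done _ _ _ hw, _ => .done _ _ _ hw
  | .step _ _ _ ⟨v₀, hv₀D, hv₀S⟩ h, hD => by
      refine .step _ _ _ ⟨v₀, fun hv => hv₀D (hD hv), hv₀S⟩ fun v hvD' hvS => ?_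
      by_cases hvD : v ∈ D
      -- Dominator's move `v` is already his in the larger position: he plays `v₀` there instead.
      · exact (h v₀ hv₀D hv₀S).of_dom_subset
          (insert_subset (mem_insert_of_mem hvD) (hD.trans (subset_insert _ _)))
      · exact (h v hvD hvS).of_dom_subset (insert_subset_insert v hD)
end

theorem StalWinS.stalWinD_of_forall_mem {D S : Finset V} {k : ℕ} (h : StalWinS G D S k)
    (hfull : ∀ v, v ∈ D ∨ v ∈ S) : StalWinD G D S k := by
  cases h with
  | done _ _ _ hw => exact .done _ _ _ hw
  | step _ _ _ w hwD hwS _ => exact absurd ((hfull w).resolve_left hwD) hwS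

theorem exists_not_stalWinS_insert_of_not_stalWinD {D S : Finset V} {k : ℕ}
    (h : ¬ StalWinD G D S k) (hfree : ∃ v, v ∉ D ∧ v ∉ S) :
    ∃ v, v ∉ D ∧ v ∉ S ∧ ¬ StalWinS G (insert v D) S k := by
  by_contra! hall
  exact h (.step _ _ _ hfree hall)

theorem StalWinD.nonempty {D S : Finset V} {k : ℕ} : StalWinD G D S k → Nonempty V
  | .done _ _ _ ⟨v, _⟩ => ⟨v⟩
  | .step _ _ _ ⟨v, _⟩ _ => ⟨v⟩

theorem gammaSMB_eq_of_isLeast {m : ℕ} (h : IsLeast {k | StalWinD G ∅ ∅ k} m) :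
    gammaSMB G = m :=
  le_antisymm (sInf_le ⟨m, rfl, h.1⟩) <| le_sInf <| by
    rintro _ ⟨n, rfl, hn⟩
    exact_mod_cast h.2 hn

theorem gammaSMB'_eq_of_isLeast {m : ℕ} (h : IsLeast {k | StalWinS G ∅ ∅ k} m) :
    gammaSMB' G = m :=
  le_antisymm (sInf_le ⟨m, rfl, h.1⟩) <| le_sInf <| by
    rintro _ ⟨n, rfl, hn⟩
    exact_mod_cast h.2 hn

end Game

section Corona

variable {α β : Type*} {G : SimpleGraph α} {H : SimpleGraph β}

def copyIndex : α ⊕ α × β → α := Sum.elim id Prod.fst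

noncomputable def copyProj (a : α) (X : Finset (α ⊕ α × β)) : Finset β :=
  X.preimage (fun b => Sum.inr (a, b)) (Sum.inr_injective.comp (Prod.mk_right_injective a)).injOn

@[simp]
theorem mem_copyProj {a : α} {X : Finset (α ⊕ α × β)} {b : β} :
    b ∈ copyProj a X ↔ Sum.inr (a, b) ∈ X :=
  mem_preimage

@[simp]
theorem copyProj_empty (a : α) : copyProj a (∅ : Finset (α ⊕ α × β)) = ∅ := by
  ext; simp

theorem copyProj_mono (a : α) {X Y : Finset (α ⊕ α × β)} (h : X ⊆ Y) :
    copyProj a X ⊆ copyProj a Y :=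
  fun _ hb => mem_copyProj.2 (h (mem_copyProj.1 hb))

theorem inl_ne_of_ne_copyIndex {a : α} {v : α ⊕ α × β} (hv : a ≠ copyIndex v) :
    Sum.inl a ≠ v := by
  rintro rfl; exact hv rfl

theorem StallerWon.coronaProd_of_copy {a : α} {S : Finset (α ⊕ α × β)} (ha : Sum.inl a ∈ S)
    (hw : StallerWon H (copyProj a S)) : StallerWon (coronaProd G H) S := by
  obtain ⟨b, hb, hN⟩ := hw
  refine ⟨Sum.inr (a, b), mem_copyProj.1 hb, ?_⟩
  rintro (a' | ⟨a', b'⟩) hadj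
  · obtain rfl : a' = a := hadj
    exact ha
  · obtain ⟨rfl, hbb'⟩ := hadj
    exact mem_copyProj.1 (hN b' hbb')

theorem StallerWon.exists_copy_of_coronaProd [Nonempty β] {S : Finset (α ⊕ α × β)}
    (hw : StallerWon (coronaProd G H) S) :
    ∃ a, Sum.inl a ∈ S ∧ StallerWon H (copyProj a S) := by
  obtain ⟨x, hx, hN⟩ := hw
  rcases x with a | ⟨a, b⟩
  · have hcopy : ∀ b, b ∈ copyProj a S := fun b => mem_copyProj.2 (hN _ rfl)
    obtain ⟨b⟩ := ‹Nonempty β›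
    exact ⟨a, hx, b, hcopy b, fun u _ => hcopy u⟩
  · exact ⟨a, hN _ rfl, b, mem_copyProj.2 hx, fun u hu => mem_copyProj.2 (hN _ ⟨rfl, hu⟩)⟩

variable [DecidableEq β]

/-- The invariant of Dominator's strategy for the `a`-th copy, Staller to move. -/
def CopySafeS (H : SimpleGraph β) (k : ℕ) (D S : Finset (α ⊕ α × β)) (a : α) : Prop :=
  (Sum.inl a ∈ S → ¬ StalWinS H (copyProj a D) (copyProj a S) k) ∧
    (Sum.inl a ∉ S → Sum.inl a ∈ D ∨ copyProj a S = ∅)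

/-- The invariant for the copy in which Staller has just moved, Dominator to move. -/
def CopySafeD (H : SimpleGraph β) (k : ℕ) (D S : Finset (α ⊕ α × β)) (a : α) : Prop :=
  Sum.inl a ∈ S → ¬ StalWinD H (copyProj a D) (copyProj a S) k

theorem copySafeS_empty (k : ℕ) (a : α) : CopySafeS H k ∅ ∅ a :=
  ⟨fun h => absurd h (notMem_empty _), fun _ => Or.inr (copyProj_empty a)⟩

theorem CopySafeS.of_le {k k' : ℕ} {D S : Finset (α ⊕ α × β)} {a : α}
    (h : CopySafeS H k' D S a) (hk : k ≤ k') : CopySafeS H k D S a :=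
  ⟨fun ha hw => h.1 ha (hw.mono_moves hk), h.2⟩

theorem not_stallerWon_coronaProd_of_copySafeS [Nonempty β] {k : ℕ}
    {D S : Finset (α ⊕ α × β)} (hsafe : ∀ a, CopySafeS H k D S a) :
    ¬ StallerWon (coronaProd G H) S := fun hw =>
  have ⟨a, ha, hwa⟩ := StallerWon.exists_copy_of_coronaProd hw
  (hsafe a).1 ha (.done _ _ _ hwa)

variable [DecidableEq α]

theorem copyProj_insert_inr (a : α) (b : β) (X : Finset (α ⊕ α × β)) :
    copyProj a (insert (Sum.inr (a, b)) X) = insert b (copyProj a X) := by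
  ext; simp

theorem copyProj_insert_of_ne {a : α} {v : α ⊕ α × β} (hv : a ≠ copyIndex v)
    (X : Finset (α ⊕ α × β)) : copyProj a (insert v X) = copyProj a X := by
  ext b
  rcases v with a' | ⟨a', b'⟩ <;> simp_all [copyIndex, eq_comm]

theorem copyProj_insert_inl (a a' : α) (X : Finset (α ⊕ α × β)) :
    copyProj a (insert (Sum.inl a') X) = copyProj a X := by
  ext; simp

theorem exists_insert_copyProj_subset {a : α} {D S : Finset (α ⊕ α × β)} {DH SH : Finset β}
    (hS : copyProj a S = SH) (hD : copyProj a D ⊆ DH) (hfree : ∃ b, b ∉ DH ∧ b ∉ SH)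
    {v : α ⊕ α × β} (hvS : v ∉ S) :
    ∃ b, b ∉ DH ∧ b ∉ SH ∧ copyProj a (insert v D) ⊆ insert b DH := by
  by_cases hv : ∃ b ∉ DH, v = Sum.inr (a, b)
  · obtain ⟨b, hbD, rfl⟩ := hv
    refine ⟨b, hbD, fun hb => hvS (mem_copyProj.1 (hS ▸ hb)), ?_⟩
    rw [copyProj_insert_inr]
    exact insert_subset_insert b hD
  · obtain ⟨b₀, hb₀D, hb₀S⟩ := hfree
    refine ⟨b₀, hb₀D, hb₀S, fun b hb => mem_insert_of_mem ?_⟩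
    rcases mem_insert.1 (mem_copyProj.1 hb) with hb' | hb'
    · by_contra hbD
      exact hv ⟨b, hbD, hb'.symm⟩
    · exact hD (mem_copyProj.2 hb')

/- Dominator's moves outside the `a`-th copy count as arbitrary moves inside it, which only
help him. -/
mutual
theorem StalWinS.coronaProd_of_copy {a : α} {D S : Finset (α ⊕ α × β)} {DH SH : Finset β}
    {k : ℕ} :
    StalWinS H DH SH k → Sum.inl a ∈ S → copyProj a S = SH → copyProj a D ⊆ DH →
      StalWinS (coronaProd G H) D S k
  | .done _ _ _ hw, ha, hS, _ => .done _ _ _ (StallerWon.coronaProd_of_copy ha (hS ▸ hw))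
  | .step _ _ _ w hwD hwS h, ha, hS, hD =>
      .step _ _ _ (Sum.inr (a, w)) (fun hw => hwD (hD (mem_copyProj.2 hw)))
        (fun hw => hwS (hS ▸ mem_copyProj.2 hw))
        (h.coronaProd_of_copy (mem_insert_of_mem ha) (by rw [copyProj_insert_inr, hS]) hD)

theorem StalWinD.coronaProd_of_copy {a : α} {D S : Finset (α ⊕ α × β)} {DH SH : Finset β}
    {k : ℕ} :
    StalWinD H DH SH k → Sum.inl a ∈ S → copyProj a S = SH → copyProj a D ⊆ DH →
      StalWinD (coronaProd G H) D S k
  | .done _ _ _ hw, ha, hS, _ => .done _ _ _ (StallerWon.coronaProd_of_copy ha (hS ▸ hw))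
  | .step _ _ _ hfree h, ha, hS, hD => by
      obtain ⟨b₀, hb₀D, hb₀S⟩ := hfree
      refine .step _ _ _ ⟨Sum.inr (a, b₀), fun hb => hb₀D (hD (mem_copyProj.2 hb)),
        fun hb => hb₀S (hS ▸ mem_copyProj.2 hb)⟩ fun v _ hvS => ?_
      obtain ⟨b, hbD, hbS, hvD⟩ :=
        exists_insert_copyProj_subset hS hD ⟨b₀, hb₀D, hb₀S⟩ hvS
      exact (h b hbD hbS).coronaProd_of_copy ha hS hvD
end

namespace CopySafeS

variable {k : ℕ} {D S : Finset (α ⊕ α × β)} {a : α}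

theorem insert_dom (h : CopySafeS H k D S a) (v : α ⊕ α × β) :
    CopySafeS H k (insert v D) S a :=
  ⟨fun ha hw => h.1 ha (hw.of_dom_subset (copyProj_mono a (subset_insert v D))),
    fun ha => (h.2 ha).imp_left (mem_insert_of_mem)⟩

theorem insert_of_ne_copyIndex (h : CopySafeS H k D S a) {w : α ⊕ α × β}
    (hw : a ≠ copyIndex w) : CopySafeS H k D (insert w S) a := by
  have hmem : Sum.inl a ∈ insert w S ↔ Sum.inl a ∈ S := by
    simp [inl_ne_of_ne_copyIndex hw]
  simpa only [CopySafeS, hmem, copyProj_insert_of_ne hw] using h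

/-- If `w` claims `a` itself, the copy is still untouched by Staller and a fresh D-game on `H`
starts there. -/
theorem copySafeD_insert (h : CopySafeS H (k + 1) D S a) (hH : ¬ StalWinD H ∅ ∅ k)
    {w : α ⊕ α × β} (hwD : w ∉ D) (hwS : w ∉ S) (hw : copyIndex w = a) :
    CopySafeD H k D (insert w S) a := by
  intro ha
  rcases w with a' | ⟨a', b⟩ <;> obtain rfl : a = a' := hw.symm
  · have hproj : copyProj a (insert (Sum.inl a) S) = ∅ := by
      rw [copyProj_insert_inl, (h.2 hwS).resolve_left hwD]
    rw [hproj]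
    exact fun hwin => hH (hwin.of_dom_subset (empty_subset _))
  · have haS : Sum.inl a ∈ S := (mem_insert.1 ha).resolve_left Sum.inl_ne_inr
    rw [copyProj_insert_inr]
    exact fun hwin => h.1 haS (.step _ _ _ b (fun hb => hwD (mem_copyProj.1 hb))
      (fun hb => hwS (mem_copyProj.1 hb)) hwin)

end CopySafeS

theorem exists_not_stalWinS_copyProj_insert {a : α} {D S : Finset (α ⊕ α × β)} {k : ℕ}
    (h : ¬ StalWinD H (copyProj a D) (copyProj a S) k) (hfree : ∃ v, v ∉ D ∧ v ∉ S) :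
    ∃ v, v ∉ D ∧ v ∉ S ∧ ¬ StalWinS H (copyProj a (insert v D)) (copyProj a S) k := by
  by_cases hcopy : ∃ b, b ∉ copyProj a D ∧ b ∉ copyProj a S
  · obtain ⟨b, hbD, hbS, hb⟩ := exists_not_stalWinS_insert_of_not_stalWinD h hcopy
    exact ⟨Sum.inr (a, b), mt mem_copyProj.2 hbD, mt mem_copyProj.2 hbS,
      by rwa [copyProj_insert_inr]⟩
  · obtain ⟨v, hvD, hvS⟩ := hfree
    refine ⟨v, hvD, hvS, fun hwin => h ?_⟩
    refine (hwin.of_dom_subset (copyProj_mono a (subset_insert v D))).stalWinD_of_forall_mem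
      fun b => ?_
    by_contra hb
    exact hcopy ⟨b, by simpa only [not_or] using hb⟩

theorem exists_copySafeS_reply {a₀ : α} {D S : Finset (α ⊕ α × β)} {k : ℕ}
    (hfree : ∃ v, v ∉ D ∧ v ∉ S) (hsafe : ∀ a ≠ a₀, CopySafeS H k D S a)
    (hpending : CopySafeD H k D S a₀) :
    ∃ v, v ∉ D ∧ v ∉ S ∧ ∀ a, CopySafeS H k (insert v D) S a := by
  suffices ∃ v, v ∉ D ∧ v ∉ S ∧ CopySafeS H k (insert v D) S a₀ by
    obtain ⟨v, hvD, hvS, hv⟩ := this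
    refine ⟨v, hvD, hvS, fun a => ?_⟩
    rcases eq_or_ne a a₀ with rfl | ha
    · exact hv
    · exact (hsafe a ha).insert_dom v
  by_cases hS : Sum.inl a₀ ∈ S
  · obtain ⟨v, hvD, hvS, hv⟩ := exists_not_stalWinS_copyProj_insert (hpending hS) hfree
    exact ⟨v, hvD, hvS, fun _ => hv, fun h => absurd hS h⟩
  · obtain ⟨v, hvD, hvS, hv⟩ : ∃ v, v ∉ D ∧ v ∉ S ∧ Sum.inl a₀ ∈ insert v D := by
      by_cases hD : Sum.inl a₀ ∈ D
      · obtain ⟨v, hvD, hvS⟩ := hfree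
        exact ⟨v, hvD, hvS, mem_insert_of_mem hD⟩
      · exact ⟨Sum.inl a₀, hD, hS, mem_insert_self _ _⟩
    exact ⟨v, hvD, hvS, fun h => absurd h hS, fun _ => Or.inl hv⟩

theorem not_stalWinD_coronaProd_of_copySafe [Nonempty β] {a₀ : α} {k : ℕ}
    (ih : ∀ D S : Finset (α ⊕ α × β), (∀ a, CopySafeS H k D S a) →
      ¬ StalWinS (coronaProd G H) D S k)
    {D S : Finset (α ⊕ α × β)} (hsafe : ∀ a ≠ a₀, CopySafeS H k D S a)
    (hpending : CopySafeD H k D S a₀) : ¬ StalWinD (coronaProd G H) D S k := by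
  intro h
  cases h with
  | done _ _ _ hw =>
    obtain ⟨a, ha, hwa⟩ := StallerWon.exists_copy_of_coronaProd hw
    rcases eq_or_ne a a₀ with rfl | hne
    · exact hpending ha (.done _ _ _ hwa)
    · exact (hsafe a hne).1 ha (.done _ _ _ hwa)
  | step _ _ _ hfree hreply =>
    obtain ⟨v, hvD, hvS, hv⟩ := exists_copySafeS_reply hfree hsafe hpending
    exact ih _ _ hv (hreply v hvD hvS)

theorem not_stalWinS_coronaProd_of_copySafeS [Nonempty β] {k : ℕ}
    (hH : ∀ j < k, ¬ StalWinD H ∅ ∅ j) :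
    ∀ D S : Finset (α ⊕ α × β), (∀ a, CopySafeS H k D S a) →
      ¬ StalWinS (coronaProd G H) D S k := by
  induction k with
  | zero =>
    rintro D S hsafe (⟨_, _, _, hw⟩)
    exact not_stallerWon_coronaProd_of_copySafeS hsafe hw
  | succ j ih =>
    rintro D S hsafe (⟨_, _, _, hw⟩ | ⟨_, _, _, w, hwD, hwS, h⟩)
    · exact not_stallerWon_coronaProd_of_copySafeS hsafe hw
    · exact not_stalWinD_coronaProd_of_copySafe (ih fun i hi => hH i (by omega))
        (a₀ := copyIndex w) (fun a ha => ((hsafe a).insert_of_ne_copyIndex ha).of_le j.le_succ)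
        ((hsafe _).copySafeD_insert (hH j j.lt_succ_self) hwD hwS rfl) h

theorem isLeast_stalWinS_coronaProd [Nonempty α] {m : ℕ}
    (hH : IsLeast {k | StalWinD H ∅ ∅ k} m) :
    IsLeast {k | StalWinS (coronaProd G H) ∅ ∅ k} (m + 1) := by
  have := hH.1.nonempty
  obtain ⟨a⟩ := ‹Nonempty α›
  refine ⟨StalWinS.step _ _ _ (Sum.inl a) (notMem_empty _) (notMem_empty _) ?_, ?_⟩
  · exact hH.1.coronaProd_of_copy (mem_insert_self _ _)
      (by rw [copyProj_insert_inl, copyProj_empty]) (by simp)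
  · intro k hk
    by_contra! hkm
    exact not_stalWinS_coronaProd_of_copySafeS
      (fun j hj hwin => Nat.not_lt.2 (hH.2 hwin) (by omega)) ∅ ∅ (copySafeS_empty k) hk

theorem isLeast_stalWinD_coronaProd [Nontrivial α] {m : ℕ}
    (hH : IsLeast {k | StalWinD H ∅ ∅ k} m) :
    IsLeast {k | StalWinD (coronaProd G H) ∅ ∅ k} (m + 1) := by
  have := hH.1.nonempty
  obtain ⟨a₁⟩ : Nonempty α := inferInstance
  refine ⟨StalWinD.step _ _ _ ⟨Sum.inl a₁, notMem_empty _, notMem_empty _⟩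
    fun v _ _ => ?_, ?_⟩
  · obtain ⟨a, ha⟩ := exists_ne (copyIndex v)
    refine StalWinS.step _ _ _ (Sum.inl a) (by simpa using inl_ne_of_ne_copyIndex ha)
      (notMem_empty _) ?_
    exact hH.1.coronaProd_of_copy (mem_insert_self _ _)
      (by rw [copyProj_insert_inl, copyProj_empty])
      (by rw [copyProj_insert_of_ne ha, copyProj_empty])
  · intro k hk
    by_contra! hkm
    exact not_stalWinD_coronaProd_of_copySafe (a₀ := a₁)
      (not_stalWinS_coronaProd_of_copySafeS fun j hj hwin => Nat.not_lt.2 (hH.2 hwin) (by omega))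
      (fun a _ => copySafeS_empty k a) (fun h => absurd h (notMem_empty _)) hk

end Corona

/-- If `o(H) = 𝒮` and `G` is connected with `n(G) ≥ 2`, then
`γ_SMB(G ⊙ H) = γ_SMB'(G ⊙ H) = 1 + γ_SMB(H)`. -/
theorem gammaSMB_coronaProd {α β : Type*} [Fintype α] [DecidableEq α]
    [Fintype β] [DecidableEq β] (G : SimpleGraph α) (H : SimpleGraph β)
    (hH : OutcomeS H) (hG : G.Connected) (hn : 2 ≤ Fintype.card α) :
    gammaSMB (coronaProd G H) = 1 + gammaSMB H ∧
    gammaSMB' (coronaProd G H) = 1 + gammaSMB H := by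
  have : Nontrivial α := Fintype.one_lt_card_iff_nontrivial.1 hn
  obtain ⟨m, hm⟩ : ∃ m, IsLeast {k | StalWinD H ∅ ∅ k} m := by
    classical exact ⟨_, Nat.isLeast_find hH.1⟩
  rw [gammaSMB_eq_of_isLeast (isLeast_stalWinD_coronaProd hm),
    gammaSMB'_eq_of_isLeast (isLeast_stalWinS_coronaProd hm), gammaSMB_eq_of_isLeast hm]
  constructor <;> push_cast <;> ring
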